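/- arXiv:1601.02731 — 6 statements merged into one kernel-verified Lean document; each statement's English description precedes it below -/
import Mathlib

section
/- Let n ≥ 2 and let σ ∈ S_n be an involution that is the product of k pairwise disjoint transpositions (i_1,j_1),…,(i_k,j_k) with i_s < j_s for all s (disjoint meaning all 2k endpoints are distinct). Let S denote the link pattern on vertex set {1,…,n} whose arcs are the pairs (i_s,j_s). Then the number of inversions of σ, i.e. #{(s,t) : 1 ≤ s < t ≤ n, σ(s) > σ(t)}, equals 2k² − k + 2·b(S) − 2·c(S) − 4·r(S). -/
/-!
Sort the vertices into openers `iₛ`, closers `jₛ` and isolated points, and count the inversions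
`(a, b)` of `σ` according to the types of `a` and `b`. Four of the nine blocks are empty, and the
others contribute: opener–opener and closer–closer pairs one nesting each, opener–isolated and
isolated–closer pairs one bridge each, and opener–closer pairs `(iₛ, jₜ)` one for each ordered
pair of arcs whose spans meet (`s = t` included). Two distinct arcs either cross, nest or lie side
by side, so these overlapping pairs number both `k + 2c + 2N` (`N` the number of nestings) and
`k² - 2r`; eliminating `N` gives the formula.
-/

open Finset Equiv Function

section SwapProduct

variable {α : Type*} [DecidableEq α]

theorem prod_map_swap_apply_of_forall_ne {l : List (α × α)} {x : α}
    (hx : ∀ q ∈ l, x ≠ q.1 ∧ x ≠ q.2) : (l.map fun q => swap q.1 q.2).prod x = x := by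
  induction l with
  | nil => rfl
  | cons a l ih =>
    simp only [List.map_cons, List.prod_cons, Perm.mul_apply]
    rw [ih fun q hq => hx q (List.mem_cons_of_mem _ hq)]
    exact swap_apply_of_ne_of_ne (hx a List.mem_cons_self).1 (hx a List.mem_cons_self).2

theorem prod_map_swap_apply_of_mem {l : List (α × α)}
    (hl : l.Pairwise fun q r => q.1 ≠ r.1 ∧ q.1 ≠ r.2 ∧ q.2 ≠ r.1 ∧ q.2 ≠ r.2)
    {q : α × α} (hq : q ∈ l) :
    (l.map fun r => swap r.1 r.2).prod q.1 = q.2 ∧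
      (l.map fun r => swap r.1 r.2).prod q.2 = q.1 := by
  induction l with
  | nil => simp at hq
  | cons a l ih =>
    obtain ⟨ha, hl⟩ := List.pairwise_cons.mp hl
    simp only [List.map_cons, List.prod_cons, Perm.mul_apply]
    rcases List.mem_cons.mp hq with rfl | hq
    · rw [prod_map_swap_apply_of_forall_ne fun r hr => ⟨(ha r hr).1, (ha r hr).2.1⟩,
        prod_map_swap_apply_of_forall_ne fun r hr => ⟨(ha r hr).2.2.1, (ha r hr).2.2.2⟩]
      exact ⟨swap_apply_left _ _, swap_apply_right _ _⟩
    · obtain ⟨h1, h2⟩ := ih hl hq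
      obtain ⟨d11, d12, d21, d22⟩ := ha q hq
      rw [h1, h2]
      exact ⟨swap_apply_of_ne_of_ne d12.symm d22.symm, swap_apply_of_ne_of_ne d11.symm d21.symm⟩

end SwapProduct

theorem card_filter_prod_swap {ι : Type*} [Fintype ι] (P : ι → ι → Prop) [DecidableRel P] :
    #(univ.filter fun st : ι × ι => P st.2 st.1) = #(univ.filter fun st : ι × ι => P st.1 st.2) :=
  card_equiv (Equiv.prodComm ι ι) (by simp)

section LinkPattern

variable {ι V : Type*} [LinearOrder V]

structure IsLinkPattern (p : ι → V × V) : Prop where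
  lt : ∀ s, (p s).1 < (p s).2
  disjoint : ∀ s t, s ≠ t →
    (p s).1 ≠ (p t).1 ∧ (p s).1 ≠ (p t).2 ∧ (p s).2 ≠ (p t).1 ∧ (p s).2 ≠ (p t).2

def IsIsolated (p : ι → V × V) (x : V) : Prop := ∀ t, x ≠ (p t).1 ∧ x ≠ (p t).2

namespace IsLinkPattern

variable {p : ι → V × V}

theorem fst_injective (hp : IsLinkPattern p) : Injective fun s => (p s).1 := fun s t h => by
  by_contra hst; exact (hp.disjoint s t hst).1 h

theorem snd_injective (hp : IsLinkPattern p) : Injective fun s => (p s).2 := fun s t h => by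
  by_contra hst; exact (hp.disjoint s t hst).2.2.2 h

theorem fst_ne_snd (hp : IsLinkPattern p) (s t : ι) : (p s).1 ≠ (p t).2 := by
  rcases eq_or_ne s t with rfl | hst
  · exact (hp.lt s).ne
  · exact (hp.disjoint s t hst).2.1

theorem bijective_sumElim (hp : IsLinkPattern p) :
    Bijective (Sum.elim (fun s => (p s).1) (Sum.elim (fun s => (p s).2) Subtype.val) :
      ι ⊕ ι ⊕ {x // IsIsolated p x} → V) := by
  refine ⟨hp.fst_injective.sumElim (hp.snd_injective.sumElim Subtype.val_injective ?_) ?_, ?_⟩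
  · rintro s ⟨x, hx⟩ rfl
    exact (hx s).2 rfl
  · rintro s (t | ⟨x, hx⟩)
    · exact hp.fst_ne_snd s t
    · rintro rfl
      exact (hx s).1 rfl
  · intro x
    by_cases hfst : ∃ s, (p s).1 = x
    · obtain ⟨s, rfl⟩ := hfst
      exact ⟨.inl s, rfl⟩
    by_cases hsnd : ∃ s, (p s).2 = x
    · obtain ⟨s, rfl⟩ := hsnd
      exact ⟨.inr (.inl s), rfl⟩
    push Not at hfst hsnd
    exact ⟨.inr (.inr ⟨x, fun t => ⟨(hfst t).symm, (hsnd t).symm⟩⟩), rfl⟩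

end IsLinkPattern

variable [Fintype ι]

instance (p : ι → V × V) : DecidablePred (IsIsolated p) :=
  fun _ => Fintype.decidableForallFintype

variable (p : ι → V × V)

def crossings : Finset (ι × ι) :=
  univ.filter fun st => (p st.2).1 < (p st.1).1 ∧ (p st.1).1 < (p st.2).2 ∧ (p st.2).2 < (p st.1).2

def nestings : Finset (ι × ι) :=
  univ.filter fun st => (p st.1).1 < (p st.2).1 ∧ (p st.2).2 < (p st.1).2

def rightPairs : Finset (ι × ι) :=
  univ.filter fun st => (p st.1).2 < (p st.2).1

def overlaps : Finset (ι × ι) :=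
  univ.filter fun st => (p st.1).1 < (p st.2).2 ∧ (p st.2).1 < (p st.1).2

namespace IsLinkPattern

variable {p}

theorem card_overlaps_add_two_mul_card_rightPairs (hp : IsLinkPattern p) :
    #(overlaps p) + 2 * #(rightPairs p) = Fintype.card ι ^ 2 := by
  have key : ∀ st : ι × ι, ((if (p st.1).1 < (p st.2).2 ∧ (p st.2).1 < (p st.1).2 then 1 else 0)
      + (if (p st.1).2 < (p st.2).1 then 1 else 0) + if (p st.2).2 < (p st.1).1 then 1 else 0) = 1 := by
    rintro ⟨s, t⟩
    have := hp.lt s; have := hp.lt t; have := hp.fst_ne_snd s t; have := hp.fst_ne_snd t s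
    simp only [ite_and]
    split_ifs <;> order
  calc #(overlaps p) + 2 * #(rightPairs p)
      = ∑ st : ι × ι, ((if (p st.1).1 < (p st.2).2 ∧ (p st.2).1 < (p st.1).2 then 1 else 0)
          + (if (p st.1).2 < (p st.2).1 then 1 else 0) + if (p st.2).2 < (p st.1).1 then 1 else 0) := by
        rw [sum_add_distrib, sum_add_distrib, ← card_filter, ← card_filter, ← card_filter,
          card_filter_prod_swap fun s t => (p s).2 < (p t).1]
        simp only [overlaps, rightPairs]
        ring
    _ = Fintype.card ι ^ 2 := by simp [key, sq]

theorem card_overlaps [DecidableEq ι] (hp : IsLinkPattern p) :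
    #(overlaps p) = Fintype.card ι + 2 * #(crossings p) + 2 * #(nestings p) := by
  have key : ∀ st : ι × ι, (if (p st.1).1 < (p st.2).2 ∧ (p st.2).1 < (p st.1).2 then 1 else 0)
      = (if st.1 = st.2 then 1 else 0)
        + (if (p st.2).1 < (p st.1).1 ∧ (p st.1).1 < (p st.2).2 ∧ (p st.2).2 < (p st.1).2 then 1 else 0)
        + (if (p st.1).1 < (p st.2).1 ∧ (p st.2).1 < (p st.1).2 ∧ (p st.1).2 < (p st.2).2 then 1 else 0)
        + (if (p st.1).1 < (p st.2).1 ∧ (p st.2).2 < (p st.1).2 then 1 else 0)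
        + (if (p st.2).1 < (p st.1).1 ∧ (p st.1).2 < (p st.2).2 then 1 else 0) := by
    rintro ⟨s, t⟩
    rcases eq_or_ne s t with rfl | hst
    · have := hp.lt s
      simp only [ite_and]
      split_ifs <;> order
    -- four distinct endpoints: overlapping arcs cross or nest, in exactly one orientation
    · obtain ⟨d11, d12, d21, d22⟩ := hp.disjoint s t hst
      have := hp.lt s; have := hp.lt t
      simp only [ite_and, if_neg hst]
      split_ifs <;> order
  rw [overlaps, card_filter, sum_congr rfl fun st _ => key st]
  simp only [sum_add_distrib, ← card_filter]
  rw [card_filter_prod_swap fun s t => (p t).1 < (p s).1 ∧ (p s).1 < (p t).2 ∧ (p t).2 < (p s).2,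
    card_filter_prod_swap fun s t => (p s).1 < (p t).1 ∧ (p t).2 < (p s).2, card_filter,
    Fintype.sum_prod_type]
  simp only [sum_ite_eq, mem_univ, if_true, sum_const, card_univ, smul_eq_mul, mul_one]
  rw [crossings, nestings]
  ring

end IsLinkPattern

variable [Fintype V]

def inversions (σ : Perm V) : Finset (V × V) :=
  univ.filter fun ab => ab.1 < ab.2 ∧ σ ab.2 < σ ab.1

def bridges : Finset (ι × V) :=
  univ.filter fun sx => (p sx.1).1 < sx.2 ∧ sx.2 < (p sx.1).2 ∧ IsIsolated p sx.2

theorem card_bridges_eq_sum : #(bridges p) =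
    ∑ s, ∑ x : {x // IsIsolated p x}, if (p s).1 < x ∧ (x : V) < (p s).2 then 1 else 0 := by
  rw [bridges, card_filter, Fintype.sum_prod_type]
  refine sum_congr rfl fun s _ => ?_
  rw [← sum_subtype (univ.filter (IsIsolated p)) (by simp)
    fun x => if (p s).1 < x ∧ x < (p s).2 then 1 else 0, sum_filter]
  refine sum_congr rfl fun x _ => ?_
  by_cases hx : IsIsolated p x <;> simp [hx]

namespace IsLinkPattern

variable {p}

theorem card_inversions_eq_overlaps_nestings_bridges (hp : IsLinkPattern p) {σ : Perm V}
    (hfst : ∀ s, σ (p s).1 = (p s).2) (hsnd : ∀ s, σ (p s).2 = (p s).1)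
    (hfix : ∀ x, IsIsolated p x → σ x = x) :
    #(inversions σ) = #(overlaps p) + 2 * #(nestings p) + 2 * #(bridges p) := by
  have hfix' : ∀ x : {x // IsIsolated p x}, σ x = x := fun x => hfix x x.2
  rw [inversions, card_filter, ← (hp.bijective_sumElim.prodMap hp.bijective_sumElim).sum_comp,
    Fintype.sum_prod_type]
  simp only [Fintype.sum_sum_type, Prod.map, Sum.elim_inl, Sum.elim_inr, hfst, hsnd, hfix']
  have h21 : ∀ s t, ¬((p s).2 < (p t).1 ∧ (p t).2 < (p s).1) := fun s t ⟨h, h'⟩ => by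
    have := hp.lt s; have := hp.lt t; order
  have h2x : ∀ s (x : V), ¬((p s).2 < x ∧ x < (p s).1) := fun s x ⟨h, h'⟩ => by
    have := hp.lt s; order
  have hx1 : ∀ (x : V) t, ¬(x < (p t).1 ∧ (p t).2 < x) := fun x t ⟨h, h'⟩ => by
    have := hp.lt t; order
  have hxx : ∀ x y : V, ¬(x < y ∧ y < x) := fun x y ⟨h, h'⟩ => lt_asymm h h'
  simp only [h21, h2x, hx1, hxx, if_false, sum_const_zero, add_zero, zero_add]
  have hN : ∑ s, ∑ t, (if (p s).1 < (p t).1 ∧ (p t).2 < (p s).2 then 1 else 0) =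
      #(nestings p) := by
    rw [nestings, card_filter, Fintype.sum_prod_type]
  have hN' : ∑ s, ∑ t, (if (p s).2 < (p t).2 ∧ (p t).1 < (p s).1 then 1 else 0) =
      #(nestings p) := by
    rw [← hN, sum_comm]
    simp only [and_comm]
  have hO : ∑ s, ∑ t, (if (p s).1 < (p t).2 ∧ (p t).1 < (p s).2 then 1 else 0) =
      #(overlaps p) := by
    rw [overlaps, card_filter, Fintype.sum_prod_type]
  have hB : ∑ x : {x // IsIsolated p x}, ∑ t, (if (x : V) < (p t).2 ∧ (p t).1 < x then 1 else 0) =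
      #(bridges p) := by
    rw [card_bridges_eq_sum, sum_comm]
    simp only [and_comm]
  rw [sum_add_distrib, sum_add_distrib, hN, hO, hN', hB, ← card_bridges_eq_sum]
  ring

theorem card_inversions_eq_crossings_rightPairs_bridges [DecidableEq ι] (hp : IsLinkPattern p)
    {σ : Perm V} (hfst : ∀ s, σ (p s).1 = (p s).2) (hsnd : ∀ s, σ (p s).2 = (p s).1)
    (hfix : ∀ x, IsIsolated p x → σ x = x) :
    (#(inversions σ) : ℤ) = 2 * Fintype.card ι ^ 2 - Fintype.card ι + 2 * #(bridges p)
      - 2 * #(crossings p) - 4 * #(rightPairs p) := by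
  have hinv := hp.card_inversions_eq_overlaps_nestings_bridges hfst hsnd hfix
  have hsq := hp.card_overlaps_add_two_mul_card_rightPairs
  have hov := hp.card_overlaps
  zify at hinv hsq hov
  linear_combination hinv + 2 * hsq - hov

end IsLinkPattern

end LinkPattern

theorem length_of_involution_typeA_general (n k : ℕ)
    (p : Fin k → Fin n × Fin n)
    (hlt : ∀ s, (p s).1 < (p s).2)
    (hdisj : ∀ s t : Fin k, s ≠ t →
      (p s).1 ≠ (p t).1 ∧ (p s).1 ≠ (p t).2 ∧ (p s).2 ≠ (p t).1 ∧ (p s).2 ≠ (p t).2)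
    (σ : Equiv.Perm (Fin n))
    (hσ : σ = (List.ofFn fun s => Equiv.swap (p s).1 (p s).2).prod) :
    ((Finset.univ.filter fun st : Fin n × Fin n =>
        st.1 < st.2 ∧ σ st.2 < σ st.1).card : ℤ) =
      2 * (k : ℤ) ^ 2 - (k : ℤ)
        + 2 * ((Finset.univ.filter fun sq : Fin k × Fin n =>
            (p sq.1).1 < sq.2 ∧ sq.2 < (p sq.1).2 ∧
              ∀ t : Fin k, sq.2 ≠ (p t).1 ∧ sq.2 ≠ (p t).2).card : ℤ)
        - 2 * ((Finset.univ.filter fun st : Fin k × Fin k =>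
            (p st.2).1 < (p st.1).1 ∧ (p st.1).1 < (p st.2).2 ∧
              (p st.2).2 < (p st.1).2).card : ℤ)
        - 4 * ((Finset.univ.filter fun st : Fin k × Fin k =>
            (p st.1).2 < (p st.2).1).card : ℤ) := by
  have hl : (List.ofFn p).Pairwise fun q r => q.1 ≠ r.1 ∧ q.1 ≠ r.2 ∧ q.2 ≠ r.1 ∧ q.2 ≠ r.2 :=
    List.pairwise_ofFn.mpr fun s t hst => hdisj s t hst.ne
  replace hσ : σ = ((List.ofFn p).map fun q => swap q.1 q.2).prod := by
    rw [hσ, List.map_ofFn]; rfl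
  subst hσ
  have hswap (s : Fin k) := prod_map_swap_apply_of_mem hl (List.mem_ofFn.mpr ⟨s, rfl⟩)
  have hfix (x : Fin n) (hx : IsIsolated p x) :=
    prod_map_swap_apply_of_forall_ne (l := List.ofFn p) fun q hq => by
      obtain ⟨s, rfl⟩ := List.mem_ofFn.mp hq
      exact hx s
  have h := (IsLinkPattern.mk hlt hdisj).card_inversions_eq_crossings_rightPairs_bridges
    (fun s => (hswap s).1) (fun s => (hswap s).2) hfix
  rw [Fintype.card_fin] at h
  -- `convert` absorbs the `Fin`-specific decidability instances of the statement's filters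
  unfold inversions bridges IsIsolated crossings rightPairs at h
  convert h

/-- Let `σ ∈ Sₙ` (`n ≥ 2`) be the product of `k` pairwise disjoint
transpositions `(iₛ, jₛ)` with `iₛ < jₛ` (encoded as `p s = (iₛ, jₛ)`), and let the
corresponding link pattern have crossing number `c`, right-pair number `r` and bridge
number `b`.  Then the number of inversions of `σ` equals `2k² − k + 2b − 2c − 4r`. -/
theorem length_of_involution_typeA (n k : ℕ) (hn : 2 ≤ n)
    (p : Fin k → Fin n × Fin n)
    (hlt : ∀ s, (p s).1 < (p s).2)
    (hdisj : ∀ s t : Fin k, s ≠ t →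
      (p s).1 ≠ (p t).1 ∧ (p s).1 ≠ (p t).2 ∧ (p s).2 ≠ (p t).1 ∧ (p s).2 ≠ (p t).2)
    (σ : Equiv.Perm (Fin n))
    (hσ : σ = (List.ofFn fun s => Equiv.swap (p s).1 (p s).2).prod) :
    ((Finset.univ.filter fun st : Fin n × Fin n =>
        st.1 < st.2 ∧ σ st.2 < σ st.1).card : ℤ) =
      2 * (k : ℤ) ^ 2 - (k : ℤ)
        + 2 * ((Finset.univ.filter fun sq : Fin k × Fin n =>
            (p sq.1).1 < sq.2 ∧ sq.2 < (p sq.1).2 ∧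
              ∀ t : Fin k, sq.2 ≠ (p t).1 ∧ sq.2 ≠ (p t).2).card : ℤ)
        - 2 * ((Finset.univ.filter fun st : Fin k × Fin k =>
            (p st.2).1 < (p st.1).1 ∧ (p st.1).1 < (p st.2).2 ∧
              (p st.2).2 < (p st.1).2).card : ℤ)
        - 4 * ((Finset.univ.filter fun st : Fin k × Fin k =>
            (p st.1).2 < (p st.2).1).card : ℤ) :=
  length_of_involution_typeA_general n k p hlt hdisj σ hσ
end

section
/- Let n ≥ 2, let σ' ∈ S_n be an involution that is the product of k−1 pairwise disjoint transpositions (i_1,j_1),…,(i_{k-1},j_{k-1}) with i_s < j_s < n for all s, and let i < n be an index that is not an endpoint of any of these transpositions. Set σ = σ'·(i,n) and c = #{s : i_s < i < j_s}. Then inv(σ) = inv(σ') + 2(n−i) − 1 − 2c, where inv denotes the number of inversions. -/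
/-!
Reindexing pairs of positions by the transposition `(i j)` shows that the inversions of
`τ * (i j)` are those of `τ` for the order on positions conjugated by `(i j)`. That order differs
from the usual one only on the pairs `(i, j)`, `(i, k)`, `(k, j)` with `i < k < j`, and counting
gives `inv (τ (i j)) = inv τ + 1 + 2 #{k | i < k < j, τ i < τ k < τ j}` whenever `τ i < τ j`.
For `τ = σ'`, which fixes `i` and the top position `n`, the positions `k > i` split into `n`,
those with `i < σ' k < n`, and those with `σ' k < i`; the last are exactly the larger endpoints
`j_s` of the transpositions straddling `i`, so there are `c` of them.
-/

open Finset Equiv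

namespace Equiv.Perm

variable {α : Type*} [LinearOrder α]

theorem ite_swap_lt_sub_ite_lt {i j : α} (hij : i < j) (x y : α) :
    ((if swap i j x < swap i j y then 1 else 0) - (if x < y then 1 else 0) : ℤ) =
      (if x = j ∧ y = i then 1 else 0) - (if x = i ∧ y = j then 1 else 0)
      + (if y = i ∧ i < x ∧ x < j then 1 else 0) - (if x = i ∧ i < y ∧ y < j then 1 else 0)
      + (if x = j ∧ i < y ∧ y < j then 1 else 0) - (if y = j ∧ i < x ∧ x < j then 1 else 0) := by
  by_cases hxi : x = i <;> by_cases hxj : x = j <;> by_cases hyi : y = i <;> by_cases hyj : y = j <;>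
    subst_vars <;> simp_all [swap_apply_of_ne_of_ne, hij.ne, hij.ne', hij.not_gt] <;> grind

variable [Fintype α]

def inversions (σ : Perm α) : Finset (α × α) :=
  univ.filter fun q => q.1 < q.2 ∧ σ q.2 < σ q.1

theorem natCast_card_inversions (σ : Perm α) :
    (#σ.inversions : ℤ) =
      ∑ q : α × α, (if σ q.2 < σ q.1 then 1 else 0) * (if q.1 < q.2 then 1 else 0) := by
  rw [inversions, natCast_card_filter]
  exact sum_congr rfl fun q _ => by simp only [ite_zero_mul_ite_zero, mul_one, and_comm]

theorem natCast_card_inversions_mul_swap (σ : Perm α) (i j : α) :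
    (#(σ * swap i j).inversions : ℤ) =
      ∑ q : α × α, (if σ q.2 < σ q.1 then 1 else 0) *
        (if swap i j q.1 < swap i j q.2 then 1 else 0) := by
  rw [natCast_card_inversions, ← (prodCongr (swap i j) (swap i j)).sum_comp]
  simp

theorem sum_ite_lt_mul_ite_fst_eq (σ : Perm α) (a : α) (P : α → Prop) [DecidablePred P] :
    ∑ q : α × α, (if σ q.2 < σ q.1 then (1 : ℤ) else 0) * (if q.1 = a ∧ P q.2 then 1 else 0) =
      #(univ.filter fun k => P k ∧ σ k < σ a) := by
  rw [natCast_card_filter]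
  simp [Fintype.sum_prod_type, ite_and, sum_ite_eq']

theorem sum_ite_lt_mul_ite_snd_eq (σ : Perm α) (a : α) (P : α → Prop) [DecidablePred P] :
    ∑ q : α × α, (if σ q.2 < σ q.1 then (1 : ℤ) else 0) * (if q.2 = a ∧ P q.1 then 1 else 0) =
      #(univ.filter fun k => P k ∧ σ a < σ k) := by
  rw [natCast_card_filter]
  simp [Fintype.sum_prod_type_right, ite_and, sum_ite_eq']

theorem card_inversions_mul_swap {σ : Perm α} {i j : α} (hij : i < j) (hσ : σ i < σ j) :
    #(σ * swap i j).inversions =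
      #σ.inversions + 2 * #(univ.filter fun k => i < k ∧ k < j ∧ σ i < σ k ∧ σ k < σ j) + 1 := by
  have hdiff : (#(σ * swap i j).inversions : ℤ) - #σ.inversions =
      ∑ q : α × α, (if σ q.2 < σ q.1 then 1 else 0) *
        ((if swap i j q.1 < swap i j q.2 then 1 else 0) - (if q.1 < q.2 then 1 else 0)) := by
    rw [natCast_card_inversions_mul_swap, natCast_card_inversions, ← sum_sub_distrib]
    simp only [mul_sub]
  simp only [ite_swap_lt_sub_ite_lt hij, mul_add, mul_sub, sum_add_distrib, sum_sub_distrib] at hdiff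
  rw [sum_ite_lt_mul_ite_fst_eq σ j (· = i), sum_ite_lt_mul_ite_fst_eq σ i (· = j),
    sum_ite_lt_mul_ite_snd_eq σ i fun k => i < k ∧ k < j,
    sum_ite_lt_mul_ite_fst_eq σ i fun k => i < k ∧ k < j,
    sum_ite_lt_mul_ite_fst_eq σ j fun k => i < k ∧ k < j,
    sum_ite_lt_mul_ite_snd_eq σ j fun k => i < k ∧ k < j] at hdiff
  have hone : #(univ.filter fun k => k = i ∧ σ k < σ j) = 1 :=
    card_eq_one.2 ⟨i, by ext k; simpa using fun hk : k = i => hk ▸ hσ⟩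
  have hzero : #(univ.filter fun k => k = j ∧ σ k < σ i) = 0 := by simp [hσ.le]
  have hbetween : ∀ k, i < k ∧ k < j → σ k ≠ σ i ∧ σ k ≠ σ j := fun k hk =>
    ⟨σ.injective.ne hk.1.ne', σ.injective.ne hk.2.ne⟩
  have hcount : (#(univ.filter fun k => (i < k ∧ k < j) ∧ σ i < σ k) : ℤ)
      - #(univ.filter fun k => (i < k ∧ k < j) ∧ σ k < σ i)
      + #(univ.filter fun k => (i < k ∧ k < j) ∧ σ k < σ j)
      - #(univ.filter fun k => (i < k ∧ k < j) ∧ σ j < σ k)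
      = 2 * #(univ.filter fun k => i < k ∧ k < j ∧ σ i < σ k ∧ σ k < σ j) := by
    simp only [natCast_card_filter, ← sum_sub_distrib, ← sum_add_distrib, mul_sum]
    refine sum_congr rfl fun k _ => ?_
    have := hbetween k
    split_ifs <;> grind
  omega

theorem card_inversions_mul_swap_of_isTop {σ : Perm α} {i t : α} (hit : i < t) (ht : IsTop t)
    (hσi : σ i = i) (hσt : σ t = t) :
    #(σ * swap i t).inversions + 1 + 2 * #(univ.filter fun k => i < k ∧ σ k < i) =
      #σ.inversions + 2 * #(univ.filter fun k => i < k) := by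
  have hsplit : #(univ.filter fun k => i < k) =
      #(univ.filter fun k => i < k ∧ k < t ∧ σ i < σ k ∧ σ k < σ t) +
        #(univ.filter fun k => i < k ∧ σ k < i) + 1 := by
    have hone : (1 : ℕ) = ∑ k, if k = t then 1 else 0 := by simp
    rw [hone, card_filter, card_filter, card_filter, ← sum_add_distrib, ← sum_add_distrib]
    refine sum_congr rfl fun k _ => ?_
    have := ht k
    have := ht (σ k)
    have : σ k = i ↔ k = i := ⟨fun h => σ.injective (h.trans hσi.symm), fun h => h ▸ hσi⟩
    have : σ k = t ↔ k = t := ⟨fun h => σ.injective (h.trans hσt.symm), fun h => h ▸ hσt⟩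
    split_ifs <;> grind
  rw [hsplit, card_inversions_mul_swap hit (by rwa [hσi, hσt])]
  ring

end Equiv.Perm

section DisjointSwaps

open Equiv.Perm

variable {α : Type*} [DecidableEq α] {m : ℕ}

def swapsProd (p : Fin m → α × α) : Perm α :=
  (List.ofFn fun s => swap (p s).1 (p s).2).prod

variable [Fintype α] {p : Fin m → α × α}

theorem swapsProd_apply_of_forall_ne {x : α} (hx : ∀ s, x ≠ (p s).1 ∧ x ≠ (p s).2) :
    swapsProd p x = x := by
  by_contra h
  obtain ⟨f, hf, hxf⟩ := exists_mem_support_of_mem_support_prod (mem_support.2 h)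
  obtain ⟨s, rfl⟩ := List.mem_ofFn.1 hf
  exact mem_support.1 hxf (swap_apply_of_ne_of_ne (hx s).1 (hx s).2)

theorem swapsProd_apply (hne : ∀ s, (p s).1 ≠ (p s).2)
    (hdisj : ∀ s t : Fin m, s ≠ t →
      (p s).1 ≠ (p t).1 ∧ (p s).1 ≠ (p t).2 ∧ (p s).2 ≠ (p t).1 ∧ (p s).2 ≠ (p t).2) (s : Fin m) :
    swapsProd p (p s).1 = (p s).2 ∧ swapsProd p (p s).2 = (p s).1 := by
  have hpw : (List.ofFn fun s => swap (p s).1 (p s).2).Pairwise Disjoint :=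
    List.pairwise_ofFn.2 fun s t hst => disjoint_swap_swap (by
      have := hdisj s t hst.ne
      simp_all [hne s, hne t])
  have hmem : swap (p s).1 (p s).2 ∈ List.ofFn fun s => swap (p s).1 (p s).2 :=
    List.mem_ofFn.2 ⟨s, rfl⟩
  have hsupp : support (swap (p s).1 (p s).2) = {(p s).1, (p s).2} := support_swap (hne s)
  constructor
  · rw [swapsProd, ← eq_on_support_mem_disjoint hmem hpw _ (by simp [hsupp]), swap_apply_left]
  · rw [swapsProd, ← eq_on_support_mem_disjoint hmem hpw _ (by simp [hsupp]), swap_apply_right]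

end DisjointSwaps

theorem card_filter_swapsProd_lt {α : Type*} [LinearOrder α] [Fintype α] {m : ℕ}
    {p : Fin m → α × α} (hlt : ∀ s, (p s).1 < (p s).2)
    (hdisj : ∀ s t : Fin m, s ≠ t →
      (p s).1 ≠ (p t).1 ∧ (p s).1 ≠ (p t).2 ∧ (p s).2 ≠ (p t).1 ∧ (p s).2 ≠ (p t).2) (a : α) :
    #(univ.filter fun k => a < k ∧ swapsProd p k < a) =
      #(univ.filter fun s => (p s).1 < a ∧ a < (p s).2) := by
  have hp := swapsProd_apply (fun s => (hlt s).ne) hdisj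
  symm
  refine card_bij (fun s _ => (p s).2) (fun s hs => ?_) (fun s _ t _ h => ?_) (fun k hk => ?_)
  · simp only [mem_filter, mem_univ, true_and] at hs ⊢
    exact ⟨hs.2, (hp s).2 ▸ hs.1⟩
  · by_contra hst
    exact (hdisj s t hst).2.2.2 h
  · simp only [mem_filter, mem_univ, true_and] at hk ⊢
    have hmoved : ∃ s, k = (p s).1 ∨ k = (p s).2 := by
      by_contra! hfix
      exact lt_asymm hk.1 (swapsProd_apply_of_forall_ne hfix ▸ hk.2)
    obtain ⟨s, rfl | rfl⟩ := hmoved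
    · exact absurd ((hp s).1 ▸ hk.2) (hk.1.trans (hlt s)).not_gt
    · exact ⟨s, ⟨(hp s).2 ▸ hk.2, hk.1⟩, rfl⟩

/-- Let `σ' ∈ Sₙ` (`n ≥ 2`) be an involution that is the product of
pairwise disjoint transpositions `(iₛ, jₛ)` with `iₛ < jₛ < n` (encoded on `Fin n`,
so the letter `n` is `⟨n − 1, _⟩`), and let `i < n` not be an endpoint of any of them.
Set `σ = σ'·(i, n)` and `c = #{s : iₛ < i < jₛ}`.  Then
`inv(σ) = inv(σ') + 2(n − i) − 1 − 2c`. -/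
theorem inversions_of_extended_involution (n : ℕ) (m : ℕ)
    (p : Fin m → Fin n × Fin n)
    (hlt : ∀ s, (p s).1 < (p s).2)
    (htop : ∀ s, ((p s).2 : ℕ) < n - 1)
    (hdisj : ∀ s t : Fin m, s ≠ t →
      (p s).1 ≠ (p t).1 ∧ (p s).1 ≠ (p t).2 ∧ (p s).2 ≠ (p t).1 ∧ (p s).2 ≠ (p t).2)
    (i : Fin n) (hi : (i : ℕ) < n - 1)
    (hfix : ∀ s : Fin m, i ≠ (p s).1 ∧ i ≠ (p s).2)
    (σ' σ : Equiv.Perm (Fin n))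
    (hσ' : σ' = (List.ofFn fun s => Equiv.swap (p s).1 (p s).2).prod)
    (hσ : σ = σ' * Equiv.swap i (⟨n - 1, by omega⟩ : Fin n)) :
    ((Finset.univ.filter fun st : Fin n × Fin n =>
        st.1 < st.2 ∧ σ st.2 < σ st.1).card : ℤ) =
      ((Finset.univ.filter fun st : Fin n × Fin n =>
        st.1 < st.2 ∧ σ' st.2 < σ' st.1).card : ℤ)
      + 2 * ((n : ℤ) - 1 - (i : ℕ)) - 1
      - 2 * ((Finset.univ.filter fun s : Fin m =>
          (p s).1 < i ∧ i < (p s).2).card : ℤ) := by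
  set t : Fin n := ⟨n - 1, by omega⟩
  replace hσ' : σ' = swapsProd p := hσ'
  have ht : IsTop t := fun x => Fin.le_def.2 (by simp [t]; omega)
  have hσ'i : σ' i = i := hσ' ▸ swapsProd_apply_of_forall_ne hfix
  have hσ't : σ' t = t := hσ' ▸ swapsProd_apply_of_forall_ne fun s => by
    have := Fin.lt_def.1 (hlt s)
    have := htop s
    exact ⟨Fin.ne_of_val_ne (by simp [t]; omega), Fin.ne_of_val_ne (by simp [t]; omega)⟩
  have hkey := Perm.card_inversions_mul_swap_of_isTop (Fin.lt_def.2 hi) ht hσ'i hσ't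
  have hc : #(univ.filter fun k => i < k ∧ σ' k < i) =
      #(univ.filter fun s => (p s).1 < i ∧ i < (p s).2) :=
    hσ' ▸ card_filter_swapsProd_lt hlt hdisj i
  have hIoi : #(univ.filter fun k => i < k) = n - 1 - i := by
    rw [filter_lt_eq_Ioi, Fin.card_Ioi]
  subst hσ
  change (#(σ' * swap i t).inversions : ℤ) = #σ'.inversions + _ - _ - _
  omega
end

section
/- Let S' be a link pattern on vertex set {1,…,n} with arcs (i_1,j_1),…,(i_{k-1},j_{k-1}) all of whose endpoints are < n, let i < n not be an endpoint of any arc, and let S = S' ∪ {(i,n)}. Put c(i,n) = #{s : i_s < i < j_s} and u(i,n) = #{s : i < i_s (and hence i < i_s < j_s < n)}. Then b(S) = b(S') + (n − 1 − i) − 2·c(i,n) − 2·u(i,n). -/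
/-!
Every vertex `v` with `i < v < n` is counted by the new arc `(i, n)` unless it is an endpoint of
an old arc; an old arc beyond `i` contributes two such endpoints and an old arc covering `i`
contributes one, which accounts for `(n - 1 - i) - 2u - c`. Adding the arc turns only `i` and `n`
into non-fixed points, and `n` lies under no old arc, so each old arc covering `i` loses exactly
one bridge: another `-c`.
-/

open Finset

/-- The bridge number of a link pattern on vertex set `{1, …, n}` with arcs
`p 0, …, p (m-1)`: the number of pairs (arc `(aₛ, bₛ)`, vertex `v`) such that
`aₛ < v < bₛ` and `v` is a fixed point (not an endpoint of any arc). -/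
def bridgeNum (n : ℕ) {m : ℕ} (p : Fin m → ℕ × ℕ) : ℕ :=
  ((Finset.univ ×ˢ Finset.Icc 1 n).filter fun sv : Fin m × ℕ =>
    (p sv.1).1 < sv.2 ∧ sv.2 < (p sv.1).2 ∧
      ∀ t : Fin m, sv.2 ≠ (p t).1 ∧ sv.2 ≠ (p t).2).card

theorem card_Ioo_filter_eq_or_eq {a b i n : ℕ} (hab : a < b) (hbn : b < n) (hia : i ≠ a)
    (hib : i ≠ b) :
    #((Ioo i n).filter fun v => v = a ∨ v = b)
      = 2 * (if i < a then 1 else 0) + (if a < i ∧ i < b then 1 else 0) := by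
  by_cases hia' : i < a
  · have : (Ioo i n).filter (fun v => v = a ∨ v = b) = {a, b} := by
      ext v; simp only [mem_filter, mem_Ioo, mem_insert, mem_singleton]; omega
    rw [this, card_pair hab.ne]
    split_ifs <;> omega
  by_cases hib' : i < b
  · have : (Ioo i n).filter (fun v => v = a ∨ v = b) = {b} := by
      ext v; simp only [mem_filter, mem_Ioo, mem_singleton]; omega
    rw [this, card_singleton]
    split_ifs <;> omega
  · have : (Ioo i n).filter (fun v => v = a ∨ v = b) = ∅ := by
      ext v; simp only [mem_filter, mem_Ioo, notMem_empty, iff_false]; omega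
    rw [this, card_empty]
    split_ifs <;> omega

section LinkPattern

variable {m : ℕ} (p : Fin m → ℕ × ℕ)

def IsFixedPt (v : ℕ) : Prop := ∀ t : Fin m, v ≠ (p t).1 ∧ v ≠ (p t).2

def EndpointsDistinct : Prop :=
  ∀ s t : Fin m, s ≠ t →
    (p s).1 ≠ (p t).1 ∧ (p s).1 ≠ (p t).2 ∧ (p s).2 ≠ (p t).1 ∧ (p s).2 ≠ (p t).2

instance : DecidablePred (IsFixedPt p) := fun v =>
  inferInstanceAs (Decidable (∀ t : Fin m, v ≠ (p t).1 ∧ v ≠ (p t).2))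

def fixedBetween (n a b : ℕ) : Finset ℕ :=
  (Icc 1 n).filter fun v => a < v ∧ v < b ∧ IsFixedPt p v

theorem bridgeNum_eq_sum_card_fixedBetween (n : ℕ) :
    bridgeNum n p = ∑ s, #(fixedBetween p n (p s).1 (p s).2) := by
  rw [bridgeNum, card_filter, sum_product]
  exact sum_congr rfl fun s _ => (card_filter _ _).symm

theorem isFixedPt_snoc_iff (a b v : ℕ) :
    IsFixedPt (Fin.snoc p (a, b) : Fin (m + 1) → ℕ × ℕ) v
      ↔ IsFixedPt p v ∧ v ≠ a ∧ v ≠ b := by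
  simp only [IsFixedPt, Fin.forall_fin_succ', Fin.snoc_castSucc, Fin.snoc_last]

theorem fixedBetween_snoc_of_le {n a b : ℕ} (i : ℕ) (hb : b ≤ n) :
    fixedBetween (Fin.snoc p (i, n)) n a b = (fixedBetween p n a b).erase i := by
  ext v
  simp only [fixedBetween, isFixedPt_snoc_iff, mem_erase, mem_filter]
  constructor
  · rintro ⟨hv, hav, hvb, hfix, hvi, -⟩
    exact ⟨hvi, hv, hav, hvb, hfix⟩
  · rintro ⟨hvi, hv, hav, hvb, hfix⟩
    exact ⟨hv, hav, hvb, hfix, hvi, by omega⟩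

theorem card_fixedBetween_snoc_add_ite {n a b i : ℕ} (hb : b ≤ n) (hi : IsFixedPt p i) :
    #(fixedBetween (Fin.snoc p (i, n)) n a b) + (if a < i ∧ i < b then 1 else 0)
      = #(fixedBetween p n a b) := by
  rw [fixedBetween_snoc_of_le p i hb]
  split_ifs with hab
  · refine card_erase_add_one ?_
    simp only [fixedBetween, mem_filter, mem_Icc]
    exact ⟨⟨by omega, by omega⟩, hab.1, hab.2, hi⟩
  · rw [erase_eq_of_notMem, add_zero]
    simp only [fixedBetween, mem_filter]
    exact fun h => hab ⟨h.2.1, h.2.2.1⟩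

theorem fixedBetween_snoc_last (n i : ℕ) :
    fixedBetween (Fin.snoc p (i, n)) n i n = (Ioo i n).filter (IsFixedPt p) := by
  ext v
  simp only [fixedBetween, isFixedPt_snoc_iff, mem_filter, mem_Icc, mem_Ioo]
  constructor
  · rintro ⟨-, hiv, hvn, hfix, -⟩
    exact ⟨⟨hiv, hvn⟩, hfix⟩
  · rintro ⟨⟨hiv, hvn⟩, hfix⟩
    exact ⟨⟨by omega, by omega⟩, hiv, hvn, hfix, by omega, by omega⟩

variable {p}

theorem card_filter_not_isFixedPt
    (hdisj : EndpointsDistinct p) (S : Finset ℕ) :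
    #(S.filter fun v => ¬ IsFixedPt p v)
      = ∑ t, #(S.filter fun v => v = (p t).1 ∨ v = (p t).2) := by
  have hunion : (S.filter fun v => ¬ IsFixedPt p v)
      = univ.biUnion fun t => S.filter fun v => v = (p t).1 ∨ v = (p t).2 := by
    ext v
    simp only [IsFixedPt, mem_filter, mem_biUnion, mem_univ, true_and, not_forall, not_and_or,
      not_not, exists_and_left]
  rw [hunion, card_biUnion]
  intro s _ t _ hst
  obtain ⟨d1, d2, d3, d4⟩ := hdisj s t hst
  simp only [disjoint_left, mem_filter]
  rintro v ⟨-, hv⟩ ⟨-, hv'⟩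
  omega

theorem card_Ioo_filter_not_isFixedPt {n i : ℕ}
    (hp : ∀ s, (p s).1 < (p s).2 ∧ (p s).2 < n)
    (hdisj : EndpointsDistinct p) (hi : IsFixedPt p i) :
    #((Ioo i n).filter fun v => ¬ IsFixedPt p v)
      = 2 * #(univ.filter fun s => i < (p s).1)
        + #(univ.filter fun s => (p s).1 < i ∧ i < (p s).2) := by
  rw [card_filter_not_isFixedPt hdisj, card_filter, card_filter, mul_sum, ← sum_add_distrib]
  exact sum_congr rfl fun s _ =>
    card_Ioo_filter_eq_or_eq (hp s).1 (hp s).2 (hi s).1 (hi s).2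

end LinkPattern

theorem bridgeNum_snoc_general (n m : ℕ)
    (p : Fin m → ℕ × ℕ)
    (hp : ∀ s, 1 ≤ (p s).1 ∧ (p s).1 < (p s).2 ∧ (p s).2 < n)
    (hdisj : ∀ s t : Fin m, s ≠ t →
      (p s).1 ≠ (p t).1 ∧ (p s).1 ≠ (p t).2 ∧ (p s).2 ≠ (p t).1 ∧ (p s).2 ≠ (p t).2)
    (i : ℕ) (hin : i < n)
    (hfix : ∀ s : Fin m, i ≠ (p s).1 ∧ i ≠ (p s).2)
    (q : Fin (m + 1) → ℕ × ℕ) (hq : q = Fin.snoc p (i, n)) :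
    (bridgeNum n q : ℤ) = (bridgeNum n p : ℤ) + ((n : ℤ) - 1 - (i : ℤ))
      - 2 * ((Finset.univ.filter fun s : Fin m =>
          (p s).1 < i ∧ i < (p s).2).card : ℤ)
      - 2 * ((Finset.univ.filter fun s : Fin m => i < (p s).1).card : ℤ) := by
  subst hq
  set c := #(univ.filter fun s : Fin m => (p s).1 < i ∧ i < (p s).2) with hc
  set u := #(univ.filter fun s : Fin m => i < (p s).1) with hu
  have hold : ∑ s : Fin m, #(fixedBetween (Fin.snoc p (i, n)) n (p s).1 (p s).2) + c
      = bridgeNum n p := by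
    rw [bridgeNum_eq_sum_card_fixedBetween, hc, card_filter, ← sum_add_distrib]
    exact sum_congr rfl fun s _ => card_fixedBetween_snoc_add_ite p (hp s).2.2.le hfix
  have hnew : #(fixedBetween (Fin.snoc p (i, n)) n i n) + (2 * u + c) = n - i - 1 := by
    rw [fixedBetween_snoc_last, hu, hc,
      ← card_Ioo_filter_not_isFixedPt (fun s => (hp s).2) hdisj hfix,
      card_filter_add_card_filter_not, Nat.card_Ioo]
  rw [bridgeNum_eq_sum_card_fixedBetween, Fin.sum_univ_castSucc]
  simp only [Fin.snoc_castSucc, Fin.snoc_last]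
  omega

/-- Let `S'` be a link pattern on `{1, …, n}` with arcs `(iₛ, jₛ)`
all of whose endpoints are `< n`, let `i < n` not be an endpoint of any arc, and let
`S = S' ∪ {(i, n)}`.  With `c(i,n) = #{s : iₛ < i < jₛ}` and `u(i,n) = #{s : i < iₛ}`,
one has `b(S) = b(S') + (n − 1 − i) − 2·c(i,n) − 2·u(i,n)`. -/
theorem bridgeNum_snoc (n m : ℕ)
    (p : Fin m → ℕ × ℕ)
    (hp : ∀ s, 1 ≤ (p s).1 ∧ (p s).1 < (p s).2 ∧ (p s).2 < n)
    (hdisj : ∀ s t : Fin m, s ≠ t →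
      (p s).1 ≠ (p t).1 ∧ (p s).1 ≠ (p t).2 ∧ (p s).2 ≠ (p t).1 ∧ (p s).2 ≠ (p t).2)
    (i : ℕ) (hi1 : 1 ≤ i) (hin : i < n)
    (hfix : ∀ s : Fin m, i ≠ (p s).1 ∧ i ≠ (p s).2)
    (q : Fin (m + 1) → ℕ × ℕ) (hq : q = Fin.snoc p (i, n)) :
    (bridgeNum n q : ℤ) = (bridgeNum n p : ℤ) + ((n : ℤ) - 1 - (i : ℤ))
      - 2 * ((Finset.univ.filter fun s : Fin m =>
          (p s).1 < i ∧ i < (p s).2).card : ℤ)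
      - 2 * ((Finset.univ.filter fun s : Fin m => i < (p s).1).card : ℤ) :=
  bridgeNum_snoc_general n m p hp hdisj i hin hfix q hq
end

section
/- Fix 1 ≤ k < n and let ŵ ∈ S_n be defined by ŵ(t) = k+1−t for 1 ≤ t ≤ k and ŵ(t) = n+k+1−t for k+1 ≤ t ≤ n (the longest element of S_k × S_{[k+1,n]}). Let S' be a set of pairwise disjoint pairs (i_s,j_s) with i_s ≤ k < j_s, and let (i,j) with i ≤ k < j be disjoint from all pairs of S'. Let σ_{S'} and σ_{S'∪{(i,j)}} be the products of the corresponding transpositions. Then ŵ·σ_{S'}·ŵ < ŵ·σ_{S'∪{(i,j)}}·ŵ strictly in the Bruhat order on S_n. -/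
/-- The Bruhat order on `Sₙ`, via the standard dot-criterion characterization:
`u ≤ v` iff for all `p, q`, `#{a ≤ p : u a ≥ q} ≤ #{a ≤ p : v a ≥ q}`. -/
def bruhatLE {n : ℕ} (u v : Equiv.Perm (Fin n)) : Prop :=
  ∀ p q : Fin n,
    (Finset.univ.filter fun a : Fin n => a ≤ p ∧ q ≤ u a).card ≤
      (Finset.univ.filter fun a : Fin n => a ≤ p ∧ q ≤ v a).card

/-- The strict Bruhat order on `Sₙ`. -/
def bruhatLT {n : ℕ} (u v : Equiv.Perm (Fin n)) : Prop :=
  bruhatLE u v ∧ u ≠ v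

/-! Multiplying `u` by a transposition that turns an ascent-pair into an inversion goes up in
the Bruhat order: outside the two swapped positions `x < y` nothing changes, and at them each
dot count `#{a ≤ p : q ≤ u a}` either stays the same or, when `x ≤ p < y`, trades `u x` for the
larger value `u y`. Conjugating by the block reversal `ŵ` turns the new arc `(i, j)` into such a
transposition, since `σ_{S'}` fixes `i` and `j` and `ŵ i < ŵ j`. -/

open Finset in
theorem bruhatLT_mul_swap {n : ℕ} {u : Equiv.Perm (Fin n)} {x y : Fin n} (hxy : x < y)
    (hu : u x < u y) : bruhatLT u (u * Equiv.swap x y) := by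
  set v := u * Equiv.swap x y
  have hvx : v x = u y := by simp [v]
  have hvy : v y = u x := by simp [v]
  refine ⟨fun p q => ?_, fun h => hu.ne (by rw [← hvy, ← h])⟩
  have hoff : ∀ c ∈ ({x, y} : Finset (Fin n))ᶜ, v c = u c := fun c hc => by
    simp only [mem_compl, mem_insert, mem_singleton, not_or] at hc
    simp [v, Equiv.swap_apply_of_ne_of_ne hc.1 hc.2]
  simp only [card_filter, ← sum_add_sum_compl {x, y}, sum_pair hxy.ne]
  refine add_le_add ?_ (sum_congr rfl fun c hc => by rw [hoff c hc]).le
  rw [hvx, hvy]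
  rw [Fin.lt_def] at hxy hu
  simp only [Fin.le_def]
  split_ifs <;> omega

theorem bruhatLT_swap_mul {n : ℕ} {u : Equiv.Perm (Fin n)} {a b : Fin n} (hab : a < b)
    (hu : u⁻¹ a < u⁻¹ b) : bruhatLT u (Equiv.swap a b * u) := by
  rw [Equiv.swap_mul_eq_mul_swap]
  exact bruhatLT_mul_swap hu (by simpa using hab)

theorem List.prod_apply_eq_self {α : Type*} {l : List (Equiv.Perm α)} {x : α}
    (h : ∀ g ∈ l, g x = x) : l.prod x = x :=
  MulAction.mem_stabilizer_iff.mp <|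
    list_prod_mem fun g hg => MulAction.mem_stabilizer_iff.mpr (h g hg)

/-- The longest element `ŵ` of `S_k × S_{[k+1,n]}`, with positions shifted to `Fin n`. -/
def IsBlockReversal {n : ℕ} (k : ℕ) (w : Equiv.Perm (Fin n)) : Prop :=
  ∀ t : Fin n, (w t : ℕ) = if (t : ℕ) < k then k - 1 - (t : ℕ) else n + k - 1 - (t : ℕ)

namespace IsBlockReversal

variable {n k : ℕ} {w : Equiv.Perm (Fin n)}

theorem apply_apply (hw : IsBlockReversal k w) (t : Fin n) : w (w t) = t := by
  have := t.isLt
  have := (w t).isLt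
  ext
  rw [hw (w t), hw t]
  split_ifs <;> omega

theorem apply_lt_apply (hw : IsBlockReversal k w) {i j : Fin n} (hi : (i : ℕ) < k)
    (hj : k ≤ (j : ℕ)) : w i < w j := by
  have := j.isLt
  rw [Fin.lt_def, hw i, hw j, if_pos hi, if_neg hj.not_gt]
  omega

end IsBlockReversal

theorem bruhat_add_arc_general (n k : ℕ) (m : ℕ)
    (p : Fin m → Fin n × Fin n)
    (i j : Fin n) (hi : (i : ℕ) < k) (hj : k ≤ (j : ℕ))
    (hnew : ∀ s : Fin m,
      i ≠ (p s).1 ∧ i ≠ (p s).2 ∧ j ≠ (p s).1 ∧ j ≠ (p s).2)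
    (w : Equiv.Perm (Fin n))
    (hw : ∀ t : Fin n,
      (w t : ℕ) = if (t : ℕ) < k then k - 1 - (t : ℕ) else n + k - 1 - (t : ℕ))
    (σ' σ : Equiv.Perm (Fin n))
    (hσ' : σ' = (List.ofFn fun s => Equiv.swap (p s).1 (p s).2).prod)
    (hσ : σ = Equiv.swap i j * σ') :
    bruhatLT (w * σ' * w) (w * σ * w) := by
  replace hw : IsBlockReversal k w := hw
  have hfix : ∀ x, (∀ s, x ≠ (p s).1 ∧ x ≠ (p s).2) → (w * σ' * w)⁻¹ (w x) = w x := by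
    intro x hx
    have hσx : σ' x = x := by
      subst hσ'
      refine List.prod_apply_eq_self fun g hg => ?_
      obtain ⟨s, rfl⟩ := List.mem_ofFn.mp hg
      exact Equiv.swap_apply_of_ne_of_ne (hx s).1 (hx s).2
    rw [Equiv.Perm.inv_eq_iff_eq]
    simp only [Equiv.Perm.mul_apply, hw.apply_apply, hσx]
  have hconj : w * σ * w = Equiv.swap (w i) (w j) * (w * σ' * w) := by
    rw [Equiv.swap_apply_apply, hσ]
    group
  rw [hconj]
  refine bruhatLT_swap_mul (hw.apply_lt_apply hi hj) ?_
  rw [hfix i fun s => ⟨(hnew s).1, (hnew s).2.1⟩,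
    hfix j fun s => ⟨(hnew s).2.2.1, (hnew s).2.2.2⟩]
  exact hw.apply_lt_apply hi hj

/-- Fix `1 ≤ k < n` and let `ŵ ∈ Sₙ` be the longest element of
`S_k × S_{[k+1,n]}` (in `Fin n`: `ŵ t = k − 1 − t` for `t < k` and
`ŵ t = n + k − 1 − t` for `t ≥ k`).  Let `S'` be a set of pairwise disjoint pairs
`(iₛ, jₛ)` with `iₛ ≤ k < jₛ` (in `Fin n`: first coordinate `< k`, second `≥ k`),
and let `(i, j)` with `i ≤ k < j` be disjoint from all pairs of `S'`.  Then
`ŵ·σ_{S'}·ŵ < ŵ·σ_{S'∪{(i,j)}}·ŵ` strictly in the Bruhat order. -/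
theorem bruhat_add_arc (n k : ℕ) (hk1 : 1 ≤ k) (hkn : k < n) (m : ℕ)
    (p : Fin m → Fin n × Fin n)
    (hp : ∀ s, ((p s).1 : ℕ) < k ∧ k ≤ ((p s).2 : ℕ))
    (hdisj : ∀ s t : Fin m, s ≠ t →
      (p s).1 ≠ (p t).1 ∧ (p s).1 ≠ (p t).2 ∧ (p s).2 ≠ (p t).1 ∧ (p s).2 ≠ (p t).2)
    (i j : Fin n) (hi : (i : ℕ) < k) (hj : k ≤ (j : ℕ))
    (hnew : ∀ s : Fin m,
      i ≠ (p s).1 ∧ i ≠ (p s).2 ∧ j ≠ (p s).1 ∧ j ≠ (p s).2)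
    (w : Equiv.Perm (Fin n))
    (hw : ∀ t : Fin n,
      (w t : ℕ) = if (t : ℕ) < k then k - 1 - (t : ℕ) else n + k - 1 - (t : ℕ))
    (σ' σ : Equiv.Perm (Fin n))
    (hσ' : σ' = (List.ofFn fun s => Equiv.swap (p s).1 (p s).2).prod)
    (hσ : σ = Equiv.swap i j * σ') :
    bruhatLT (w * σ' * w) (w * σ * w) :=
  bruhat_add_arc_general n k m p i j hi hj hnew w hw σ' σ hσ' hσ
end

section
/- Fix 1 ≤ k < n and let ŵ ∈ S_n be defined by ŵ(t) = k+1−t for 1 ≤ t ≤ k and ŵ(t) = n+k+1−t for k+1 ≤ t ≤ n. Let T be a set of pairwise disjoint pairs (i_s,j_s) with i_s ≤ k < j_s, let i₁, i ≤ k be two distinct indices that are not endpoints of any pair of T, and let j₁ > k not be an endpoint of any pair of T. Put S = {(i₁,j₁)} ∪ T and S' = {(i,j₁)} ∪ T, and let σ_S, σ_{S'} be the products of the corresponding transpositions. Then ŵ·σ_{S'}·ŵ < ŵ·σ_S·ŵ in the Bruhat order on S_n if and only if i < i₁. -/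
open Equiv Finset

theorem Equiv.Perm.list_prod_apply_eq_self {α : Type*} {l : List (Perm α)} {x : α}
    (h : ∀ f ∈ l, f x = x) : l.prod x = x :=
  MulAction.mem_stabilizer_iff.mp <|
    Subgroup.list_prod_mem _ fun f hf => MulAction.mem_stabilizer_iff.mpr (h f hf)

theorem Equiv.swap_mul_swap_mul_mul_swap {α : Type*} [DecidableEq α] {σ : Perm α} {x y z : α}
    (hσx : σ x = x) (hσy : σ y = y) (hzx : z ≠ x) (hzy : z ≠ y) :
    swap x y * (swap y z * σ) * swap x y = swap x z * σ := by
  have hconj : swap x y * swap y z * swap x y = swap x z := by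
    simpa [swap_apply_of_ne_of_ne hzx hzy] using (swap_apply_apply (swap x y) y z).symm
  rw [mul_assoc, mul_assoc, mul_swap_eq_swap_mul σ, hσx, hσy, ← mul_assoc, ← mul_assoc, hconj]

theorem Equiv.mul_swap_mul_mul_swap_mul_of_involutive {α : Type*} [DecidableEq α] {w : Perm α}
    (hw : Function.Involutive w) (σ : Perm α) (x y : α) :
    w * (swap x y * σ * swap x y) * w = swap (w x) (w y) * (w * σ * w) * swap (w x) (w y) := by
  have hinv : w⁻¹ = w := inv_eq_of_mul_eq_one_right (Equiv.ext hw)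
  have hww : ∀ g : Perm α, w * (w * g) = g := fun g => by
    nth_rewrite 1 [← hinv]
    exact inv_mul_cancel_left w g
  rw [swap_apply_apply, hinv]
  simp only [mul_assoc, hww]

section Bruhat

variable {n : ℕ}

theorem bruhatLE_iff_of_eqOn_compl {u v : Perm (Fin n)} (s : Finset (Fin n))
    (huv : ∀ t ∉ s, u t = v t) :
    bruhatLE u v ↔ ∀ p q : Fin n,
      #{a ∈ s | a ≤ p ∧ q ≤ u a} ≤ #{a ∈ s | a ≤ p ∧ q ≤ v a} := by
  refine forall₂_congr fun p q => ?_
  have hcompl : ∑ t ∈ sᶜ, (if t ≤ p ∧ q ≤ u t then 1 else 0) =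
      ∑ t ∈ sᶜ, (if t ≤ p ∧ q ≤ v t then 1 else 0) :=
    sum_congr rfl fun t ht => by rw [huv t (mem_compl.mp ht)]
  rw [card_filter, card_filter, ← sum_add_sum_compl s, ← sum_add_sum_compl s, hcompl,
    add_le_add_iff_right, ← card_filter, ← card_filter]

theorem bruhatLE_swap_mul_mul_swap_iff {v : Perm (Fin n)} {a a₁ b : Fin n}
    (hva : v a = a) (hva₁ : v a₁ = b) (hvb : v b = a₁) (hab : a < b) (ha₁b : a₁ < b) :
    bruhatLE (swap a a₁ * v * swap a a₁) v ↔ a₁ < a := by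
  have haa₁ : a ≠ a₁ := by rintro rfl; exact hab.ne (hva.symm.trans hva₁)
  have hswapb : swap a a₁ b = b := swap_apply_of_ne_of_ne hab.ne' ha₁b.ne'
  set u := swap a a₁ * v * swap a a₁
  have hua : u a = b := by simp [u, hva₁, hswapb]
  have hua₁ : u a₁ = a₁ := by simp [u, hva]
  have hub : u b = a := by simp [u, hswapb, hvb]
  have huv : ∀ t ∉ ({a, a₁, b} : Finset (Fin n)), u t = v t := by
    intro t ht
    simp only [mem_insert, mem_singleton, not_or] at ht
    have hvt₁ : v t ≠ a := fun h => ht.1 (v.injective (h.trans hva.symm))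
    have hvt₂ : v t ≠ a₁ := fun h => ht.2.2 (v.injective (h.trans hvb.symm))
    simp [u, swap_apply_of_ne_of_ne ht.1 ht.2.1, swap_apply_of_ne_of_ne hvt₁ hvt₂]
  rw [bruhatLE_iff_of_eqOn_compl _ huv]
  simp only [card_filter, sum_insert, mem_insert, mem_singleton, haa₁, hab.ne, ha₁b.ne,
    or_self, not_false_eq_true, sum_singleton, hua, hua₁, hub, hva, hva₁, hvb, Fin.le_def]
  rw [Fin.lt_def] at hab ha₁b ⊢
  constructor
  · intro h
    by_contra! hle
    have := h a a₁
    split_ifs at this <;> omega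
  · intro h p q
    split_ifs <;> omega

theorem bruhatLT_swap_mul_mul_swap_iff {v : Perm (Fin n)} {a a₁ b : Fin n}
    (hva : v a = a) (hva₁ : v a₁ = b) (hvb : v b = a₁) (hab : a < b) (ha₁b : a₁ < b) :
    bruhatLT (swap a a₁ * v * swap a a₁) v ↔ a₁ < a := by
  refine (and_iff_left_of_imp fun _ h => hab.ne' ?_).trans
    (bruhatLE_swap_mul_mul_swap_iff hva hva₁ hvb hab ha₁b)
  simpa [hva, hva₁, swap_apply_of_ne_of_ne hab.ne' ha₁b.ne'] using congrArg (· a) h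

end Bruhat

theorem involutive_of_val_eq_reverse_blocks {n k : ℕ} {w : Perm (Fin n)}
    (hw : ∀ t : Fin n, (w t : ℕ) = if (t : ℕ) < k then k - 1 - (t : ℕ) else n + k - 1 - (t : ℕ)) :
    Function.Involutive w := fun t => by
  have := t.isLt
  ext
  rw [hw, hw]
  split_ifs <;> omega

theorem bruhat_move_left_endpoint_general (n k : ℕ) (m : ℕ)
    (p : Fin m → Fin n × Fin n)
    (i₁ i j₁ : Fin n) (hi₁ : (i₁ : ℕ) < k) (hi : (i : ℕ) < k) (hii₁ : i ≠ i₁)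
    (hj₁ : k ≤ (j₁ : ℕ))
    (hnew : ∀ s : Fin m,
      i₁ ≠ (p s).1 ∧ i₁ ≠ (p s).2 ∧ i ≠ (p s).1 ∧ i ≠ (p s).2 ∧
        j₁ ≠ (p s).1 ∧ j₁ ≠ (p s).2)
    (w : Equiv.Perm (Fin n))
    (hw : ∀ t : Fin n,
      (w t : ℕ) = if (t : ℕ) < k then k - 1 - (t : ℕ) else n + k - 1 - (t : ℕ))
    (σT σS σS' : Equiv.Perm (Fin n))
    (hσT : σT = (List.ofFn fun s => Equiv.swap (p s).1 (p s).2).prod)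
    (hσS : σS = Equiv.swap i₁ j₁ * σT)
    (hσS' : σS' = Equiv.swap i j₁ * σT) :
    bruhatLT (w * σS' * w) (w * σS * w) ↔ i < i₁ := by
  have hfix : ∀ x : Fin n, (∀ s, x ≠ (p s).1 ∧ x ≠ (p s).2) → σT x = x := fun x hx => by
    rw [hσT]
    refine Perm.list_prod_apply_eq_self fun f hf => ?_
    obtain ⟨s, rfl⟩ := List.mem_ofFn.mp hf
    exact swap_apply_of_ne_of_ne (hx s).1 (hx s).2
  have hσTi : σT i = i := hfix i fun s => ⟨(hnew s).2.2.1, (hnew s).2.2.2.1⟩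
  have hσTi₁ : σT i₁ = i₁ := hfix i₁ fun s => ⟨(hnew s).1, (hnew s).2.1⟩
  have hσTj₁ : σT j₁ = j₁ := hfix j₁ fun s => ⟨(hnew s).2.2.2.2.1, (hnew s).2.2.2.2.2⟩
  have hij₁ : i ≠ j₁ := by omega
  have hi₁j₁ : i₁ ≠ j₁ := by omega
  have hσS'_conj : σS' = swap i i₁ * σS * swap i i₁ := by
    rw [hσS, hσS', swap_mul_swap_mul_mul_swap hσTi hσTi₁ hij₁.symm hi₁j₁.symm]
  have hinvol := involutive_of_val_eq_reverse_blocks hw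
  have hvi : (w * σS * w) (w i) = w i := by
    simp [hinvol i, hσS, hσTi, swap_apply_of_ne_of_ne hii₁ hij₁]
  have hvi₁ : (w * σS * w) (w i₁) = w j₁ := by simp [hinvol i₁, hσS, hσTi₁]
  have hvj₁ : (w * σS * w) (w j₁) = w i₁ := by simp [hinvol j₁, hσS, hσTj₁]
  have hwi : (w i : ℕ) = k - 1 - i := by rw [hw, if_pos hi]
  have hwi₁ : (w i₁ : ℕ) = k - 1 - i₁ := by rw [hw, if_pos hi₁]
  have hwj₁ : (w j₁ : ℕ) = n + k - 1 - j₁ := by rw [hw, if_neg (by omega)]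
  have := j₁.isLt
  rw [hσS'_conj, mul_swap_mul_mul_swap_mul_of_involutive hinvol,
    bruhatLT_swap_mul_mul_swap_iff hvi hvi₁ hvj₁ (by omega) (by omega)]
  omega

/-- Fix `1 ≤ k < n` and let `ŵ ∈ Sₙ` be the longest element of
`S_k × S_{[k+1,n]}`.  Let `T` be a set of pairwise disjoint pairs `(iₛ, jₛ)` with
`iₛ ≤ k < jₛ`, let `i₁, i ≤ k` be two distinct indices which are not endpoints of
any pair of `T`, and let `j₁ > k` not be an endpoint of any pair of `T`.  Put
`S = {(i₁, j₁)} ∪ T` and `S' = {(i, j₁)} ∪ T`.  Then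
`ŵ·σ_{S'}·ŵ < ŵ·σ_S·ŵ` in the Bruhat order iff `i < i₁`. -/
theorem bruhat_move_left_endpoint (n k : ℕ) (hk1 : 1 ≤ k) (hkn : k < n) (m : ℕ)
    (p : Fin m → Fin n × Fin n)
    (hp : ∀ s, ((p s).1 : ℕ) < k ∧ k ≤ ((p s).2 : ℕ))
    (hdisj : ∀ s t : Fin m, s ≠ t →
      (p s).1 ≠ (p t).1 ∧ (p s).1 ≠ (p t).2 ∧ (p s).2 ≠ (p t).1 ∧ (p s).2 ≠ (p t).2)
    (i₁ i j₁ : Fin n) (hi₁ : (i₁ : ℕ) < k) (hi : (i : ℕ) < k) (hii₁ : i ≠ i₁)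
    (hj₁ : k ≤ (j₁ : ℕ))
    (hnew : ∀ s : Fin m,
      i₁ ≠ (p s).1 ∧ i₁ ≠ (p s).2 ∧ i ≠ (p s).1 ∧ i ≠ (p s).2 ∧
        j₁ ≠ (p s).1 ∧ j₁ ≠ (p s).2)
    (w : Equiv.Perm (Fin n))
    (hw : ∀ t : Fin n,
      (w t : ℕ) = if (t : ℕ) < k then k - 1 - (t : ℕ) else n + k - 1 - (t : ℕ))
    (σT σS σS' : Equiv.Perm (Fin n))
    (hσT : σT = (List.ofFn fun s => Equiv.swap (p s).1 (p s).2).prod)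
    (hσS : σS = Equiv.swap i₁ j₁ * σT)
    (hσS' : σS' = Equiv.swap i j₁ * σT) :
    bruhatLT (w * σS' * w) (w * σS * w) ↔ i < i₁ :=
  bruhat_move_left_endpoint_general n k m p i₁ i j₁ hi₁ hi hii₁ hj₁ hnew w hw σT σS σS' hσT hσS hσS'
end

section
/- Fix 1 ≤ k < n and let ŵ ∈ S_n be defined by ŵ(t) = k+1−t for 1 ≤ t ≤ k and ŵ(t) = n+k+1−t for k+1 ≤ t ≤ n. Let T be a set of pairwise disjoint pairs (i_s,j_s) with i_s ≤ k < j_s, let i₁ ≤ k not be an endpoint of any pair of T, and let j₁, j > k be two distinct indices that are not endpoints of any pair of T. Put S = {(i₁,j₁)} ∪ T and S' = {(i₁,j)} ∪ T, and let σ_S, σ_{S'} be the products of the corresponding transpositions. Then ŵ·σ_{S'}·ŵ < ŵ·σ_S·ŵ in the Bruhat order on S_n if and only if j > j₁. -/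
open Equiv Finset

theorem Finset.card_filter_add_card_filter_of_iff_of_notMem {α : Type*} [Fintype α]
    [DecidableEq α] {P Q : α → Prop} [DecidablePred P] [DecidablePred Q] (s : Finset α)
    (h : ∀ x ∉ s, P x ↔ Q x) :
    #{x | P x} + #{x ∈ s | Q x} = #{x | Q x} + #{x ∈ s | P x} := by
  have hcompl : ∑ x ∈ sᶜ, (if P x then 1 else 0) = ∑ x ∈ sᶜ, (if Q x then 1 else 0) :=
    sum_congr rfl fun x hx => by rw [if_congr (h x (mem_compl.mp hx)) rfl rfl]
  simp only [card_filter, ← sum_add_sum_compl s, hcompl]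
  ring

namespace Equiv.Perm

variable {n : ℕ}

theorem bruhatLE_iff_of_eqOn_compl {u v : Perm (Fin n)} (s : Finset (Fin n))
    (huv : ∀ x ∉ s, u x = v x) :
    bruhatLE u v ↔ ∀ p q, #{x ∈ s | x ≤ p ∧ q ≤ u x} ≤ #{x ∈ s | x ≤ p ∧ q ≤ v x} := by
  refine forall₂_congr fun p q => ?_
  have := card_filter_add_card_filter_of_iff_of_notMem (P := fun x => x ≤ p ∧ q ≤ u x)
    (Q := fun x => x ≤ p ∧ q ≤ v x) s fun x hx => by rw [huv x hx]
  omega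

theorem bruhatLE_mul_iff_of_eqOn_compl {u v τ : Perm (Fin n)} (s : Finset (Fin n))
    (huv : ∀ x ∉ s, u x = v x) (hτ : ∀ x ∈ s, τ x = x) :
    bruhatLE (u * τ) (v * τ) ↔ bruhatLE u v := by
  have hτs : ∀ x ∉ s, τ x ∉ s := fun x hx hτx => hx (by rwa [← τ.injective (hτ _ hτx)])
  rw [bruhatLE_iff_of_eqOn_compl (u := u * τ) (v := v * τ) s fun x hx => huv _ (hτs x hx),
    bruhatLE_iff_of_eqOn_compl s huv]
  have hs (w : Perm (Fin n)) (p q : Fin n) :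
      ({x ∈ s | x ≤ p ∧ q ≤ (w * τ) x} : Finset _) = {x ∈ s | x ≤ p ∧ q ≤ w x} :=
    filter_congr fun x hx => by rw [mul_apply, hτ x hx]
  simp only [hs]

theorem swap_apply_eq_swap_apply_of_notMem {α : Type*} [DecidableEq α] {a b c x : α}
    (hx : x ∉ ({a, b, c} : Finset α)) : swap a c x = swap a b x := by
  simp only [mem_insert, mem_singleton, not_or] at hx
  rw [swap_apply_of_ne_of_ne hx.1 hx.2.2, swap_apply_of_ne_of_ne hx.1 hx.2.1]

theorem bruhatLE_swap_swap_iff {a b c : Fin n} (hab : a < b) (hac : a < c) (hbc : b ≠ c) :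
    bruhatLE (swap a c) (swap a b) ↔ c < b := by
  rw [bruhatLE_iff_of_eqOn_compl _ fun x => swap_apply_eq_swap_apply_of_notMem]
  simp only [card_filter, sum_insert, sum_singleton, mem_insert, mem_singleton, hab.ne, hac.ne,
    hbc, or_false, not_false_eq_true, swap_apply_left, swap_apply_right,
    swap_apply_of_ne_of_ne hab.ne' hbc, swap_apply_of_ne_of_ne hac.ne' hbc.symm]
  simp only [Fin.le_def, Fin.lt_def] at *
  constructor
  · intro h
    have := h b b
    split_ifs at this <;> omega
  · intro h p q
    split_ifs <;> omega

theorem bruhatLT_swap_mul_swap_mul_iff {a b c : Fin n} {τ : Perm (Fin n)} (hτa : τ a = a)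
    (hτb : τ b = b) (hτc : τ c = c) (hab : a < b) (hac : a < c) (hbc : b ≠ c) :
    bruhatLT (swap a c * τ) (swap a b * τ) ↔ c < b := by
  have hne : swap a c * τ ≠ swap a b * τ := fun h => hbc <| Eq.symm <| by
    simpa using congrArg (· a) (mul_right_cancel h)
  have hτ : ∀ x ∈ ({a, b, c} : Finset (Fin n)), τ x = x := by
    simp only [mem_insert, mem_singleton]
    rintro x (rfl | rfl | rfl) <;> assumption
  rw [bruhatLT, bruhatLE_mul_iff_of_eqOn_compl _
    (fun x => swap_apply_eq_swap_apply_of_notMem) hτ, bruhatLE_swap_swap_iff hab hac hbc]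
  exact and_iff_left hne

theorem ofFn_swap_prod_apply_of_ne {α : Type*} [DecidableEq α] {m : ℕ}
    (p : Fin m → α × α) {x : α} (hx : ∀ s, x ≠ (p s).1 ∧ x ≠ (p s).2) :
    (List.ofFn fun s => swap (p s).1 (p s).2).prod x = x :=
  List.prod_induction (fun σ : Perm α => σ x = x)
    (fun σ τ hσ hτ => by rw [Perm.mul_apply, hτ, hσ]) rfl
    (fun σ hσ => by
      obtain ⟨s, rfl⟩ := List.mem_ofFn.mp hσ
      exact swap_apply_of_ne_of_ne (hx s).1 (hx s).2)

end Equiv.Perm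

theorem bruhat_move_right_endpoint_general (n k : ℕ) (m : ℕ)
    (p : Fin m → Fin n × Fin n)
    (i₁ j₁ j : Fin n) (hi₁ : (i₁ : ℕ) < k) (hj₁ : k ≤ (j₁ : ℕ)) (hj : k ≤ (j : ℕ))
    (hjj₁ : j ≠ j₁)
    (hnew : ∀ s : Fin m,
      i₁ ≠ (p s).1 ∧ i₁ ≠ (p s).2 ∧ j₁ ≠ (p s).1 ∧ j₁ ≠ (p s).2 ∧
        j ≠ (p s).1 ∧ j ≠ (p s).2)
    (w : Equiv.Perm (Fin n))
    (hw : ∀ t : Fin n,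
      (w t : ℕ) = if (t : ℕ) < k then k - 1 - (t : ℕ) else n + k - 1 - (t : ℕ))
    (σT σS σS' : Equiv.Perm (Fin n))
    (hσT : σT = (List.ofFn fun s => Equiv.swap (p s).1 (p s).2).prod)
    (hσS : σS = Equiv.swap i₁ j₁ * σT)
    (hσS' : σS' = Equiv.swap i₁ j * σT) :
    bruhatLT (w * σS' * w) (w * σS * w) ↔ j₁ < j := by
  have hww : w * w = 1 := Perm.ext fun t => Fin.ext <| by
    have := t.isLt; have := (w t).isLt
    rw [Perm.mul_apply, Perm.one_apply, hw (w t), hw t]; split_ifs at * <;> omega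
  have hconj (x y : Fin n) : w * (swap x y * σT) * w = swap (w x) (w y) * (w * σT * w) := by
    rw [swap_apply_apply, inv_eq_of_mul_eq_one_right hww]
    simp only [mul_assoc, ← mul_assoc w w, hww, one_mul]
  have hfix {x : Fin n} (hx : ∀ s, x ≠ (p s).1 ∧ x ≠ (p s).2) : (w * σT * w) (w x) = w x := by
    rw [Perm.mul_apply, Perm.mul_apply, ← Perm.mul_apply w w, hww, Perm.one_apply, hσT,
      Perm.ofFn_swap_prod_apply_of_ne p hx]
  have hwi₁ : (w i₁ : ℕ) = k - 1 - i₁ := by rw [hw, if_pos hi₁]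
  have hwj₁ : (w j₁ : ℕ) = n + k - 1 - j₁ := by rw [hw, if_neg (by omega)]
  have hwj : (w j : ℕ) = n + k - 1 - j := by rw [hw, if_neg (by omega)]
  have := j.isLt; have := j₁.isLt
  subst hσS hσS'
  rw [hconj, hconj, Perm.bruhatLT_swap_mul_swap_mul_iff
      (hfix fun s => ⟨(hnew s).1, (hnew s).2.1⟩)
      (hfix fun s => ⟨(hnew s).2.2.1, (hnew s).2.2.2.1⟩)
      (hfix fun s => ⟨(hnew s).2.2.2.2.1, (hnew s).2.2.2.2.2⟩)
      (Fin.lt_def.mpr (by omega)) (Fin.lt_def.mpr (by omega)) (w.injective.ne hjj₁.symm),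
    Fin.lt_def, Fin.lt_def]
  omega

/-- Fix `1 ≤ k < n` and let `ŵ ∈ Sₙ` be the longest element of
`S_k × S_{[k+1,n]}`.  Let `T` be a set of pairwise disjoint pairs `(iₛ, jₛ)` with
`iₛ ≤ k < jₛ`, let `i₁ ≤ k` not be an endpoint of any pair of `T`, and let
`j₁, j > k` be two distinct indices which are not endpoints of any pair of `T`.  Put
`S = {(i₁, j₁)} ∪ T` and `S' = {(i₁, j)} ∪ T`.  Then
`ŵ·σ_{S'}·ŵ < ŵ·σ_S·ŵ` in the Bruhat order iff `j > j₁`. -/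
theorem bruhat_move_right_endpoint (n k : ℕ) (hk1 : 1 ≤ k) (hkn : k < n) (m : ℕ)
    (p : Fin m → Fin n × Fin n)
    (hp : ∀ s, ((p s).1 : ℕ) < k ∧ k ≤ ((p s).2 : ℕ))
    (hdisj : ∀ s t : Fin m, s ≠ t →
      (p s).1 ≠ (p t).1 ∧ (p s).1 ≠ (p t).2 ∧ (p s).2 ≠ (p t).1 ∧ (p s).2 ≠ (p t).2)
    (i₁ j₁ j : Fin n) (hi₁ : (i₁ : ℕ) < k) (hj₁ : k ≤ (j₁ : ℕ)) (hj : k ≤ (j : ℕ))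
    (hjj₁ : j ≠ j₁)
    (hnew : ∀ s : Fin m,
      i₁ ≠ (p s).1 ∧ i₁ ≠ (p s).2 ∧ j₁ ≠ (p s).1 ∧ j₁ ≠ (p s).2 ∧
        j ≠ (p s).1 ∧ j ≠ (p s).2)
    (w : Equiv.Perm (Fin n))
    (hw : ∀ t : Fin n,
      (w t : ℕ) = if (t : ℕ) < k then k - 1 - (t : ℕ) else n + k - 1 - (t : ℕ))
    (σT σS σS' : Equiv.Perm (Fin n))
    (hσT : σT = (List.ofFn fun s => Equiv.swap (p s).1 (p s).2).prod)
    (hσS : σS = Equiv.swap i₁ j₁ * σT)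
    (hσS' : σS' = Equiv.swap i₁ j * σT) :
    bruhatLT (w * σS' * w) (w * σS * w) ↔ j₁ < j :=
  bruhat_move_right_endpoint_general n k m p i₁ j₁ j hi₁ hj₁ hj hjj₁ hnew w hw σT σS σS' hσT hσS
    hσS'
end
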